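/- Let 𝔽 be a field and R = 𝔽[u] the polynomial ring in one variable. Let M₁ and M₂ be finitely generated R-modules and φᵢ : Mᵢ → R (i = 1, 2) R-linear maps whose kernels are torsion R-modules and whose ranges equal the principal ideals generated by u^{h₁} and u^{h₂}, respectively. Then the R-linear map ψ : M₁ ⊗_R M₂ → R determined by ψ(m₁ ⊗ m₂) = φ₁(m₁)·φ₂(m₂) has torsion kernel and its range equals the principal ideal generated by u^{h₁+h₂}. -/

import Mathlib

/-!
Choose `wᵢ` with `φᵢ wᵢ = X ^ hᵢ`. Since `ker φᵢ` is torsion and `range φᵢ = (φᵢ wᵢ)`, every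
element of `Mᵢ` has a nonzero multiple in `R ∙ wᵢ`, so every element of `M₁ ⊗ M₂` has one in
`R ∙ (w₁ ⊗ w₂)`. If `ψ z = 0` and `a • z = c • (w₁ ⊗ w₂)` with `a ≠ 0`, applying `ψ` gives
`c * X ^ (h₁ + h₂) = 0`, so `c = 0` and `z` is torsion. The range of `ψ` is the product of the
ranges of `φ₁` and `φ₂`.
-/

open Polynomial TensorProduct
open scoped nonZeroDivisors

section

open Module Submodule LinearMap

variable {R M M₁ M₂ : Type*} [CommRing R] [AddCommGroup M] [Module R M]
  [AddCommGroup M₁] [Module R M₁] [AddCommGroup M₂] [Module R M₂]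

theorem isTorsion_quotient_iff (N : Submodule R M) :
    IsTorsion R (M ⧸ N) ↔ ∀ m : M, ∃ a : R⁰, a • m ∈ N := by
  simp only [IsTorsion, N.mkQ_surjective.forall, mkQ_apply, Submonoid.smul_def,
    ← Quotient.mk_smul, Quotient.mk_eq_zero]

theorem isTorsion_submodule_iff (N : Submodule R M) :
    IsTorsion R N ↔ ∀ m ∈ N, ∃ a : R⁰, a • m = 0 := by
  simp [IsTorsion, Subtype.ext_iff]

theorem isTorsion_quotient_span_singleton_of_isTorsion_ker {φ : M →ₗ[R] R} {w : M}
    (hker : IsTorsion R (ker φ)) (hrange : range φ = Ideal.span {φ w}) :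
    IsTorsion R (M ⧸ R ∙ w) := by
  refine (isTorsion_quotient_iff _).mpr fun m ↦ ?_
  obtain ⟨c, hc⟩ := Ideal.mem_span_singleton'.mp (hrange ▸ mem_range_self φ m)
  obtain ⟨a, ha⟩ := (isTorsion_submodule_iff _).mp hker (m - c • w) (by simp [← hc])
  refine ⟨a, mem_span_singleton.mpr ⟨a * c, ?_⟩⟩
  rw [smul_sub, sub_eq_zero] at ha
  rw [ha, Submonoid.smul_def, mul_smul]

theorem isTorsion_quotient_span_tmul {w₁ : M₁} {w₂ : M₂}
    (h₁ : IsTorsion R (M₁ ⧸ R ∙ w₁)) (h₂ : IsTorsion R (M₂ ⧸ R ∙ w₂)) :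
    IsTorsion R (M₁ ⊗[R] M₂ ⧸ R ∙ (w₁ ⊗ₜ w₂)) := by
  rw [isTorsion_quotient_iff] at h₁ h₂ ⊢
  intro z
  induction z using TensorProduct.induction_on with
  | zero => exact ⟨1, by simp⟩
  | tmul m₁ m₂ =>
    obtain ⟨a₁, ha₁⟩ := h₁ m₁
    obtain ⟨a₂, ha₂⟩ := h₂ m₂
    obtain ⟨c₁, hc₁⟩ := mem_span_singleton.mp ha₁
    obtain ⟨c₂, hc₂⟩ := mem_span_singleton.mp ha₂
    refine ⟨a₁ * a₂, mem_span_singleton.mpr ⟨c₁ * c₂, ?_⟩⟩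
    rw [← smul_tmul_smul, hc₁, hc₂, Submonoid.smul_def, Submonoid.smul_def, smul_tmul_smul,
      Submonoid.smul_def, Submonoid.coe_mul]
  | add z₁ z₂ ih₁ ih₂ =>
    obtain ⟨a₁, ha₁⟩ := ih₁
    obtain ⟨a₂, ha₂⟩ := ih₂
    refine ⟨a₁ * a₂, ?_⟩
    rw [smul_add, mul_comm, mul_smul, mul_comm, mul_smul]
    exact add_mem (smul_mem _ _ ha₁) (smul_mem _ _ ha₂)

theorem isTorsion_ker_of_isTorsion_quotient {φ : M →ₗ[R] R} {w : M}
    (h : IsTorsion R (M ⧸ R ∙ w)) (hw : φ w ∈ R⁰) : IsTorsion R (ker φ) := by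
  refine (isTorsion_submodule_iff _).mpr fun z hz ↦ ?_
  obtain ⟨a, ha⟩ := (isTorsion_quotient_iff _).mp h z
  obtain ⟨c, hc⟩ := mem_span_singleton.mp ha
  have hc0 : c * φ w = 0 := by
    rw [← smul_eq_mul, ← map_smul, hc, Submonoid.smul_def, map_smul, mem_ker.mp hz, smul_zero]
  refine ⟨a, ?_⟩
  rw [← hc, (mul_right_mem_nonZeroDivisors_eq_zero_iff hw).mp hc0, zero_smul]

theorem range_eq_range_mul_range {φ₁ : M₁ →ₗ[R] R} {φ₂ : M₂ →ₗ[R] R}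
    {ψ : M₁ ⊗[R] M₂ →ₗ[R] R} (hψ : ∀ m₁ m₂, ψ (m₁ ⊗ₜ m₂) = φ₁ m₁ * φ₂ m₂) :
    range ψ = range φ₁ * range φ₂ := by
  refine le_antisymm ?_ (Submodule.mul_le.mpr ?_)
  · rintro _ ⟨z, rfl⟩
    induction z using TensorProduct.induction_on with
    | zero => simp
    | tmul m₁ m₂ => exact hψ m₁ m₂ ▸ mul_mem_mul (mem_range_self _ _) (mem_range_self _ _)
    | add z₁ z₂ ih₁ ih₂ => exact map_add ψ z₁ z₂ ▸ add_mem ih₁ ih₂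
  · rintro _ ⟨m₁, rfl⟩ _ ⟨m₂, rfl⟩
    exact ⟨m₁ ⊗ₜ m₂, hψ m₁ m₂⟩

end

theorem stmt_7_general (𝔽 : Type*) [Field 𝔽]
    (M₁ M₂ : Type*) [AddCommGroup M₁] [Module (Polynomial 𝔽) M₁]
    [AddCommGroup M₂] [Module (Polynomial 𝔽) M₂]
    (φ₁ : M₁ →ₗ[Polynomial 𝔽] Polynomial 𝔽) (φ₂ : M₂ →ₗ[Polynomial 𝔽] Polynomial 𝔽)
    (h₁ h₂ : ℕ)
    (htor₁ : Module.IsTorsion (Polynomial 𝔽) (LinearMap.ker φ₁))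
    (htor₂ : Module.IsTorsion (Polynomial 𝔽) (LinearMap.ker φ₂))
    (hrange₁ : LinearMap.range φ₁ = Ideal.span {(X : Polynomial 𝔽) ^ h₁})
    (hrange₂ : LinearMap.range φ₂ = Ideal.span {(X : Polynomial 𝔽) ^ h₂})
    (ψ : M₁ ⊗[Polynomial 𝔽] M₂ →ₗ[Polynomial 𝔽] Polynomial 𝔽)
    (hψ : ∀ (m₁ : M₁) (m₂ : M₂), ψ (m₁ ⊗ₜ m₂) = φ₁ m₁ * φ₂ m₂) :
    Module.IsTorsion (Polynomial 𝔽) (LinearMap.ker ψ) ∧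
    LinearMap.range ψ = Ideal.span {(X : Polynomial 𝔽) ^ (h₁ + h₂)} := by
  obtain ⟨w₁, hw₁⟩ := hrange₁.ge (Ideal.mem_span_singleton_self _)
  obtain ⟨w₂, hw₂⟩ := hrange₂.ge (Ideal.mem_span_singleton_self _)
  rw [← hw₁] at hrange₁
  rw [← hw₂] at hrange₂
  have hψw : ψ (w₁ ⊗ₜ w₂) ∈ (Polynomial 𝔽)⁰ := by
    rw [hψ, hw₁, hw₂]
    exact mem_nonZeroDivisors_of_ne_zero (by simp [X_ne_zero])
  have htor : Module.IsTorsion (Polynomial 𝔽) (M₁ ⊗[Polynomial 𝔽] M₂ ⧸ _ ∙ (w₁ ⊗ₜ w₂)) :=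
    isTorsion_quotient_span_tmul
      (isTorsion_quotient_span_singleton_of_isTorsion_ker htor₁ hrange₁)
      (isTorsion_quotient_span_singleton_of_isTorsion_ker htor₂ hrange₂)
  refine ⟨isTorsion_ker_of_isTorsion_quotient htor hψw, ?_⟩
  rw [range_eq_range_mul_range hψ, hrange₁, hrange₂, Ideal.span_singleton_mul_span_singleton,
    hw₁, hw₂, pow_add]

/-- Additivity for the tower lemma data: if `φᵢ : Mᵢ → 𝔽[u]` have torsion kernels and
ranges `(u^{hᵢ})`, then `ψ : M₁ ⊗ M₂ → 𝔽[u]`, `ψ(m₁ ⊗ m₂) = φ₁(m₁)·φ₂(m₂)`, has torsion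
kernel and range `(u^{h₁+h₂})`. -/
theorem stmt_7 (𝔽 : Type*) [Field 𝔽]
    (M₁ M₂ : Type*) [AddCommGroup M₁] [Module (Polynomial 𝔽) M₁]
    [AddCommGroup M₂] [Module (Polynomial 𝔽) M₂]
    [Module.Finite (Polynomial 𝔽) M₁] [Module.Finite (Polynomial 𝔽) M₂]
    (φ₁ : M₁ →ₗ[Polynomial 𝔽] Polynomial 𝔽) (φ₂ : M₂ →ₗ[Polynomial 𝔽] Polynomial 𝔽)
    (h₁ h₂ : ℕ)
    (htor₁ : Module.IsTorsion (Polynomial 𝔽) (LinearMap.ker φ₁))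
    (htor₂ : Module.IsTorsion (Polynomial 𝔽) (LinearMap.ker φ₂))
    (hrange₁ : LinearMap.range φ₁ = Ideal.span {(X : Polynomial 𝔽) ^ h₁})
    (hrange₂ : LinearMap.range φ₂ = Ideal.span {(X : Polynomial 𝔽) ^ h₂})
    (ψ : M₁ ⊗[Polynomial 𝔽] M₂ →ₗ[Polynomial 𝔽] Polynomial 𝔽)
    (hψ : ∀ (m₁ : M₁) (m₂ : M₂), ψ (m₁ ⊗ₜ m₂) = φ₁ m₁ * φ₂ m₂) :
    Module.IsTorsion (Polynomial 𝔽) (LinearMap.ker ψ) ∧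
    LinearMap.range ψ = Ideal.span {(X : Polynomial 𝔽) ^ (h₁ + h₂)} :=
  stmt_7_general 𝔽 M₁ M₂ φ₁ φ₂ h₁ h₂ htor₁ htor₂ hrange₁ hrange₂ ψ hψ
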